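/- arXiv:1607.06565 — 4 statements merged into one kernel-verified Lean document; each statement's English description precedes it below -/
import Mathlib

section
/- Let (Ω, 𝓕, P) be a probability space, m ⊆ 𝓕 a sub-σ-algebra, J a finite index set, and a : J → ℝ fixed weights. Let U : Ω → ℝ and W : Ω → ℝ be a.s. bounded, with W m-measurable. Suppose for each j ∈ J there are: a sub-σ-algebra 𝓖_j with m ⊆ 𝓖_j ⊆ 𝓕 such that U is 𝓖_j-measurable; an a.s. bounded 𝓖_j-measurable V_j : Ω → ℝ; an a.s. bounded m-measurable H_j : Ω → ℝ; and an a.s. bounded measurable Y_j : Ω → ℝ with E[Y_j | 𝓖_j] = H_j + V_j almost everywhere. Then almost everywhere, E[(∑_{j∈J} a_j·Y_j)·(U − W) | m] − E[∑_{j∈J} a_j·Y_j | m]·E[U − W | m] = ∑_{j∈J} a_j·(E[U·V_j | m] − E[U | m]·E[V_j | m]). (This is Lemma 2 of the paper: the conditional covariance between the weighted sum of neighbors' behaviors ∑_j A_{ij}Y_{j,t} and the location-error term γ₁ᵀC_i − γ₀ᵀĈ_i, given the estimated locations, equals ∑_j A_{ij}·γ₁ᵀ Cov(C_i, C_j | Ĉ_i,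 Ĉ_j) γ₁.) -/
open MeasureTheory


lemma integrable_of_abs_le {Ω : Type*} {𝓕 : MeasurableSpace Ω} {P : Measure Ω}
    [IsFiniteMeasure P] {f : Ω → ℝ} (hf : AEStronglyMeasurable f P) {B : ℝ}
    (hb : ∀ᵐ ω ∂P, |f ω| ≤ B) : Integrable f P :=
  (integrable_const B).mono' hf (by filter_upwards [hb] with ω h; simpa [Real.norm_eq_abs] using h)

lemma abs_mul_le {x y bx by' : ℝ} (hx : |x| ≤ bx) (hy : |y| ≤ by') : |x * y| ≤ bx * by' := by
  rw [abs_mul]; exact mul_le_mul hx hy (abs_nonneg _) ((abs_nonneg _).trans hx)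

/-- Lemma 2 of the paper: the conditional covariance between a weighted sum
`∑ j, a j • Y j` of neighbors' behaviors and the location-error term `U − W`, given `m`,
equals the weighted sum of the conditional covariances `Cov(U, V j | m)`. -/
theorem cond_cov_weighted_sum_with_location_error
    {Ω : Type*} (m : MeasurableSpace Ω) {𝓕 : MeasurableSpace Ω} (P : Measure Ω) [IsProbabilityMeasure P]
    (hm : m ≤ 𝓕)
    (J : Type*) [Fintype J] (a : J → ℝ)
    (U W : Ω → ℝ) (hU : Measurable U) (hW : Measurable[m] W)
    (BU BW : ℝ) (hUb : ∀ᵐ ω ∂P, |U ω| ≤ BU) (hWb : ∀ᵐ ω ∂P, |W ω| ≤ BW)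
    (𝓖 : J → MeasurableSpace Ω) (hm𝓖 : ∀ j, m ≤ 𝓖 j) (h𝓖 : ∀ j, 𝓖 j ≤ 𝓕)
    (hU𝓖 : ∀ j, Measurable[𝓖 j] U)
    (V H Y : J → Ω → ℝ)
    (hV : ∀ j, Measurable[𝓖 j] (V j)) (hH : ∀ j, Measurable[m] (H j))
    (hY : ∀ j, Measurable (Y j))
    (BV BH BY : J → ℝ)
    (hVb : ∀ j, ∀ᵐ ω ∂P, |V j ω| ≤ BV j)
    (hHb : ∀ j, ∀ᵐ ω ∂P, |H j ω| ≤ BH j)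
    (hYb : ∀ j, ∀ᵐ ω ∂P, |Y j ω| ≤ BY j)
    (hcond : ∀ j, P[Y j | 𝓖 j] =ᵐ[P] (fun ω => H j ω + V j ω)) :
    (fun ω => (P[fun ω => (∑ j, a j * Y j ω) * (U ω - W ω) | m]) ω
        - (P[fun ω => ∑ j, a j * Y j ω | m]) ω * (P[fun ω => U ω - W ω | m]) ω)
      =ᵐ[P]
    (fun ω => ∑ j, a j *
        ((P[fun ω => U ω * V j ω | m]) ω - (P[U | m]) ω * (P[V j | m]) ω)) := by
  -- measurability facts w.r.t. the big σ-algebra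
  have hUF : Measurable[𝓕] U := hU
  have hWF : Measurable[𝓕] W := hW.mono hm le_rfl
  have hVF : ∀ j, Measurable[𝓕] (V j) := fun j => (hV j).mono (h𝓖 j) le_rfl
  have hHF : ∀ j, Measurable[𝓕] (H j) := fun j => (hH j).mono hm le_rfl
  have hYF : ∀ j, Measurable[𝓕] (Y j) := fun j => (hY j)
  -- integrability facts
  have intU : Integrable U P := integrable_of_abs_le hUF.aestronglyMeasurable hUb
  have intW : Integrable W P := integrable_of_abs_le hWF.aestronglyMeasurable hWb
  have intV : ∀ j, Integrable (V j) P := fun j =>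
    integrable_of_abs_le (hVF j).aestronglyMeasurable (hVb j)
  have intH : ∀ j, Integrable (H j) P := fun j =>
    integrable_of_abs_le (hHF j).aestronglyMeasurable (hHb j)
  have intY : ∀ j, Integrable (Y j) P := fun j =>
    integrable_of_abs_le (hYF j).aestronglyMeasurable (hYb j)
  have intUY : ∀ j, Integrable (fun ω => U ω * Y j ω) P := fun j =>
    integrable_of_abs_le ((hUF.mul (hYF j)).aestronglyMeasurable)
      (by filter_upwards [hUb, hYb j] with ω h1 h2 using abs_mul_le h1 h2)
  have intYU : ∀ j, Integrable (fun ω => Y j ω * U ω) P := fun j =>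
    integrable_of_abs_le (((hYF j).mul hUF).aestronglyMeasurable)
      (by filter_upwards [hUb, hYb j] with ω h1 h2 using abs_mul_le h2 h1)
  have intWY : ∀ j, Integrable (fun ω => W ω * Y j ω) P := fun j =>
    integrable_of_abs_le ((hWF.mul (hYF j)).aestronglyMeasurable)
      (by filter_upwards [hWb, hYb j] with ω h1 h2 using abs_mul_le h1 h2)
  have intUV : ∀ j, Integrable (fun ω => U ω * V j ω) P := fun j =>
    integrable_of_abs_le ((hUF.mul (hVF j)).aestronglyMeasurable)
      (by filter_upwards [hUb, hVb j] with ω h1 h2 using abs_mul_le h1 h2)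
  have intUH : ∀ j, Integrable (fun ω => U ω * H j ω) P := fun j =>
    integrable_of_abs_le ((hUF.mul (hHF j)).aestronglyMeasurable)
      (by filter_upwards [hUb, hHb j] with ω h1 h2 using abs_mul_le h1 h2)
  -- the summand functions
  set g : J → Ω → ℝ := fun j ω => Y j ω * (U ω - W ω) with hg
  have intg : ∀ j, Integrable (g j) P := by
    intro j
    have : g j = (fun ω => Y j ω * U ω) - fun ω => W ω * Y j ω := by
      funext ω; simp only [hg, Pi.sub_apply]; ring
    rw [this]; exact (intYU j).sub (intWY j)
  -- e1 : pull W out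
  have e1 : ∀ j, P[g j | m] =ᵐ[P]
      fun ω => (P[fun ω => Y j ω * U ω | m]) ω - W ω * (P[Y j | m]) ω := by
    intro j
    have hgeq : g j = (fun ω => Y j ω * U ω) - fun ω => W ω * Y j ω := by
      funext ω; simp only [hg, Pi.sub_apply]; ring
    have h1 : P[g j | m] =ᵐ[P]
        P[fun ω => Y j ω * U ω | m] - P[fun ω => W ω * Y j ω | m] := by
      rw [hgeq]; exact condExp_sub (intYU j) (intWY j) m
    have h2 : P[fun ω => W ω * Y j ω | m] =ᵐ[P] W * P[Y j | m] :=
      condExp_mul_of_stronglyMeasurable_left hW.stronglyMeasurable (intWY j) (intY j)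
    filter_upwards [h1, h2] with ω h1 h2
    simp only [Pi.sub_apply, Pi.mul_apply] at h1 h2 ⊢
    rw [h1, h2]
  -- e2 : tower property for Y j * U
  have e2 : ∀ j, P[fun ω => Y j ω * U ω | m] =ᵐ[P]
      fun ω => H j ω * (P[U | m]) ω + (P[fun ω => U ω * V j ω | m]) ω := by
    intro j
    haveI : SigmaFinite (P.trim (h𝓖 j)) := by
      infer_instance
    have s1 : P[fun ω => Y j ω * U ω | 𝓖 j] =ᵐ[P] fun ω => U ω * (P[Y j | 𝓖 j]) ω := by
      have := condExp_mul_of_stronglyMeasurable_left (μ := P) (m := 𝓖 j)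
        (hU𝓖 j).stronglyMeasurable (intUY j) (intY j)
      refine (condExp_congr_ae (g := fun ω => U ω * Y j ω) ?_).trans ?_
      · exact Filter.Eventually.of_forall fun ω => mul_comm _ _
      · exact this
    have s2 : P[fun ω => Y j ω * U ω | 𝓖 j] =ᵐ[P]
        fun ω => U ω * H j ω + U ω * V j ω := by
      filter_upwards [s1, hcond j] with ω h1 h2
      rw [h1, h2]; ring
    have s3 : P[fun ω => Y j ω * U ω | m] =ᵐ[P]
        P[fun ω => U ω * H j ω + U ω * V j ω | m] := by
      refine (condExp_condExp_of_le (hm𝓖 j) (h𝓖 j)).symm.trans ?_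
      exact condExp_congr_ae s2
    have s4 : P[fun ω => U ω * H j ω + U ω * V j ω | m] =ᵐ[P]
        P[fun ω => U ω * H j ω | m] + P[fun ω => U ω * V j ω | m] :=
      condExp_add (intUH j) (intUV j) m
    have s5 : P[fun ω => U ω * H j ω | m] =ᵐ[P] H j * P[U | m] := by
      refine (condExp_congr_ae (g := fun ω => H j ω * U ω) ?_).trans ?_
      · exact Filter.Eventually.of_forall fun ω => mul_comm _ _
      · exact condExp_mul_of_stronglyMeasurable_left (hH j).stronglyMeasurable
          (by
            have : H j * U = fun ω => U ω * H j ω := by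
              funext ω; simp [mul_comm]
            rw [this]; exact intUH j) intU
    filter_upwards [s3, s4, s5] with ω h3 h4 h5
    simp only [Pi.add_apply, Pi.mul_apply] at h3 h4 h5 ⊢
    rw [h3, h4, h5]
  -- e3 : tower property for Y j
  have e3 : ∀ j, P[Y j | m] =ᵐ[P] fun ω => H j ω + (P[V j | m]) ω := by
    intro j
    haveI : SigmaFinite (P.trim (h𝓖 j)) := by infer_instance
    have s3 : P[Y j | m] =ᵐ[P] P[fun ω => H j ω + V j ω | m] :=
      (condExp_condExp_of_le (hm𝓖 j) (h𝓖 j)).symm.trans (condExp_congr_ae (hcond j))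
    have s4 : P[fun ω => H j ω + V j ω | m] =ᵐ[P] P[H j | m] + P[V j | m] :=
      condExp_add (intH j) (intV j) m
    have s5 : P[H j | m] = H j :=
      condExp_of_stronglyMeasurable hm (hH j).stronglyMeasurable (intH j)
    filter_upwards [s3, s4] with ω h3 h4
    simp only [Pi.add_apply] at h3 h4 ⊢
    rw [h3, h4, s5]
  -- hA : conditional expectation of the product sum
  have hA : P[fun ω => (∑ j, a j * Y j ω) * (U ω - W ω) | m] =ᵐ[P]
      fun ω => ∑ j, a j * (P[g j | m]) ω := by
    have heq : (fun ω => (∑ j, a j * Y j ω) * (U ω - W ω)) = ∑ j, a j • g j := by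
      funext ω
      simp only [Finset.sum_apply, Pi.smul_apply, smul_eq_mul, hg, Finset.sum_mul]
      exact Finset.sum_congr rfl fun j _ => by ring
    rw [heq]
    refine (condExp_finset_sum (fun j _ => ((intg j).smul (a j))) m).trans ?_
    have hsm : ∀ᵐ ω ∂P, ∀ j, (P[a j • g j | m]) ω = a j * (P[g j | m]) ω := by
      rw [ae_all_iff]
      intro j
      filter_upwards [condExp_smul (μ := P) (m := m) (a j) (g j)] with ω h
      simpa using h
    filter_upwards [hsm] with ω h
    simp only [Finset.sum_apply]
    exact Finset.sum_congr rfl fun j _ => h j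
  -- hB : conditional expectation of the sum
  have hB : P[fun ω => ∑ j, a j * Y j ω | m] =ᵐ[P]
      fun ω => ∑ j, a j * (P[Y j | m]) ω := by
    have heq : (fun ω => ∑ j, a j * Y j ω) = ∑ j, a j • Y j := by
      funext ω; simp [Finset.sum_apply]
    rw [heq]
    refine (condExp_finset_sum (fun j _ => ((intY j).smul (a j))) m).trans ?_
    have hsm : ∀ᵐ ω ∂P, ∀ j, (P[a j • Y j | m]) ω = a j * (P[Y j | m]) ω := by
      rw [ae_all_iff]
      intro j
      filter_upwards [condExp_smul (μ := P) (m := m) (a j) (Y j)] with ω h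
      simpa using h
    filter_upwards [hsm] with ω h
    simp only [Finset.sum_apply]
    exact Finset.sum_congr rfl fun j _ => h j
  -- hC : conditional expectation of U - W
  have hC : P[fun ω => U ω - W ω | m] =ᵐ[P] fun ω => (P[U | m]) ω - W ω := by
    have h1 : P[fun ω => U ω - W ω | m] =ᵐ[P] P[U | m] - P[W | m] :=
      condExp_sub intU intW m
    rw [condExp_of_stronglyMeasurable hm hW.stronglyMeasurable intW] at h1
    filter_upwards [h1] with ω h
    simpa using h
  -- collect the per-j a.e. facts
  have hall : ∀ᵐ ω ∂P, ∀ j,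
      (P[g j | m]) ω = (P[fun ω => Y j ω * U ω | m]) ω - W ω * (P[Y j | m]) ω ∧
      (P[fun ω => Y j ω * U ω | m]) ω
        = H j ω * (P[U | m]) ω + (P[fun ω => U ω * V j ω | m]) ω ∧
      (P[Y j | m]) ω = H j ω + (P[V j | m]) ω := by
    rw [ae_all_iff]
    intro j
    filter_upwards [e1 j, e2 j, e3 j] with ω h1 h2 h3
    exact ⟨h1, h2, h3⟩
  filter_upwards [hA, hB, hC, hall] with ω hA hB hC hall
  simp only [hA, hB, hC]
  rw [Finset.sum_mul, ← Finset.sum_sub_distrib]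
  refine Finset.sum_congr rfl fun j _ => ?_
  obtain ⟨h1, h2, h3⟩ := hall j
  rw [h1, h2, h3]; ring
end

section
/- (Lemma 3, conditional form, per matrix coordinate.) Let (Ω, 𝓕, P) be a probability space, m ⊆ 𝓕 a sub-σ-algebra, A ∈ 𝓕 an event with indicator G = 1_A, and δ ∈ (0,1) a constant with E[G | m] = 1 − δ almost everywhere. Let X, Y : Ω → ℝ be a.s. bounded and measurable, and let X̂, Ŷ : Ω → ℝ be a.s. bounded and m-measurable with X·G = X̂·G a.e. and Y·G = Ŷ·G a.e. (on the event A, the variables equal their m-measurable estimates). Define X̃ := δ⁻¹·E[X·(1−G) | m], Ỹ := δ⁻¹·E[Y·(1−G) | m], and Q := δ⁻¹·E[X·Y·(1−G) | m]. Then almost everywhere, E[X·Y | m] − E[X | m]·E[Y | m] = δ·(Q − X̃·Ỹ) + δ·(1−δ)·(X̂ − X̃)·(Ŷ − Ỹ). In particular the conditional covariance of X and Y given m is O(δ). -/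
open MeasureTheory

lemma helper_split
    {Ω : Type*} {𝓕 : MeasurableSpace Ω} (P : Measure Ω) [IsProbabilityMeasure P]
    (m : MeasurableSpace Ω) (hm : m ≤ 𝓕)
    (G : Ω → ℝ) (hGmeas : Measurable[𝓕] G) (hGb : ∀ ω, |G ω| ≤ 1)
    (δ : ℝ) (hGm : P[G | m] =ᵐ[P] (fun _ => 1 - δ))
    (f fhat : Ω → ℝ) (hf : Measurable[𝓕] f) (hfhat : Measurable[m] fhat)
    (B Bh : ℝ) (hfb : ∀ᵐ ω ∂P, |f ω| ≤ B) (hfhb : ∀ᵐ ω ∂P, |fhat ω| ≤ Bh)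
    (hfA : (fun ω => f ω * G ω) =ᵐ[P] (fun ω => fhat ω * G ω)) :
    P[f | m] =ᵐ[P] (fun ω => fhat ω * (1 - δ) + (P[fun ω => f ω * (1 - G ω) | m]) ω) := by
  have hfhatF : Measurable[𝓕] fhat := hfhat.mono hm le_rfl
  have intf : Integrable f P := by
    refine Integrable.mono' (integrable_const B) hf.aestronglyMeasurable ?_
    filter_upwards [hfb] with ω h using h
  have intG : Integrable G P := by
    refine Integrable.mono' (integrable_const 1) hGmeas.aestronglyMeasurable ?_
    exact Filter.Eventually.of_forall hGb
  have intfG : Integrable (fun ω => f ω * G ω) P := by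
    refine Integrable.mono' (integrable_const B) (hf.mul hGmeas).aestronglyMeasurable ?_
    filter_upwards [hfb] with ω h
    calc ‖f ω * G ω‖ = |f ω| * |G ω| := abs_mul _ _
      _ ≤ |f ω| * 1 := by
          exact mul_le_mul_of_nonneg_left (hGb ω) (abs_nonneg _)
      _ ≤ B := by simpa using h
  have intf1G : Integrable (fun ω => f ω * (1 - G ω)) P := by
    have : (fun ω => f ω * (1 - G ω)) = fun ω => f ω - f ω * G ω := by
      funext ω; ring
    rw [this]; exact intf.sub intfG
  have intfhG : Integrable (fhat * G) P := by
    refine Integrable.mono' (integrable_const Bh) (hfhatF.mul hGmeas).aestronglyMeasurable ?_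
    filter_upwards [hfhb] with ω h
    calc ‖fhat ω * G ω‖ = |fhat ω| * |G ω| := abs_mul _ _
      _ ≤ |fhat ω| * 1 := mul_le_mul_of_nonneg_left (hGb ω) (abs_nonneg _)
      _ ≤ Bh := by simpa using h
  have hsplit : f = fun ω => f ω * G ω + f ω * (1 - G ω) := by
    funext ω; ring
  calc P[f | m] = P[fun ω => f ω * G ω + f ω * (1 - G ω) | m] := by rw [← hsplit]
    _ =ᵐ[P] (fun ω => (P[fun ω => f ω * G ω | m]) ω + (P[fun ω => f ω * (1 - G ω) | m]) ω) :=
        condExp_add intfG intf1G m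
    _ =ᵐ[P] (fun ω => fhat ω * (1 - δ) + (P[fun ω => f ω * (1 - G ω) | m]) ω) := by
        have h1 : P[fun ω => f ω * G ω | m] =ᵐ[P] P[fhat * G | m] :=
          condExp_congr_ae hfA
        have h2 : P[fhat * G | m] =ᵐ[P] fhat * P[G | m] :=
          condExp_mul_of_stronglyMeasurable_left hfhat.stronglyMeasurable intfhG intG
        filter_upwards [h1, h2, hGm] with ω e1 e2 e3
        simp only [Pi.mul_apply] at e1 e2 ⊢
        rw [e1, e2, e3]

/-- Lemma 3 of the paper, conditional form, per matrix coordinate.  With `G = 1_A`,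
`E[G | m] = 1 − δ` a.e., and `X, Y` agreeing with their `m`-measurable estimates
`X̂, Ŷ` on the event `A`, the conditional covariance of `X` and `Y` given `m` equals
`δ·(Q − X̃·Ỹ) + δ·(1−δ)·(X̂ − X̃)·(Ŷ − Ỹ)` a.e., where
`X̃ = δ⁻¹·E[X·(1−G) | m]`, `Ỹ = δ⁻¹·E[Y·(1−G) | m]`, `Q = δ⁻¹·E[X·Y·(1−G) | m]`.
In particular the conditional covariance is `O(δ)`. -/
theorem cond_cov_eq_of_exact_recovery_event
    {Ω : Type*} (m : MeasurableSpace Ω) {𝓕 : MeasurableSpace Ω} (P : Measure Ω) [IsProbabilityMeasure P]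
    (hm : m ≤ 𝓕)
    (A : Set Ω) (hA : MeasurableSet A)
    (G : Ω → ℝ) (hG : G = A.indicator (fun _ => (1 : ℝ)))
    (δ : ℝ) (hδ0 : 0 < δ) (hδ1 : δ < 1)
    (hGm : P[G | m] =ᵐ[P] (fun _ => 1 - δ))
    (X Y Xhat Yhat : Ω → ℝ)
    (hX : Measurable X) (hY : Measurable Y)
    (hXhat : Measurable[m] Xhat) (hYhat : Measurable[m] Yhat)
    (BX BY BXhat BYhat : ℝ)
    (hXb : ∀ᵐ ω ∂P, |X ω| ≤ BX) (hYb : ∀ᵐ ω ∂P, |Y ω| ≤ BY)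
    (hXhatb : ∀ᵐ ω ∂P, |Xhat ω| ≤ BXhat) (hYhatb : ∀ᵐ ω ∂P, |Yhat ω| ≤ BYhat)
    (hXA : (fun ω => X ω * G ω) =ᵐ[P] (fun ω => Xhat ω * G ω))
    (hYA : (fun ω => Y ω * G ω) =ᵐ[P] (fun ω => Yhat ω * G ω)) :
    (fun ω => (P[fun ω => X ω * Y ω | m]) ω - (P[X | m]) ω * (P[Y | m]) ω)
      =ᵐ[P]
    (fun ω =>
      δ * ((δ⁻¹ * (P[fun ω => X ω * Y ω * (1 - G ω) | m]) ω)
            - (δ⁻¹ * (P[fun ω => X ω * (1 - G ω) | m]) ω)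
              * (δ⁻¹ * (P[fun ω => Y ω * (1 - G ω) | m]) ω))
      + δ * (1 - δ)
          * (Xhat ω - δ⁻¹ * (P[fun ω => X ω * (1 - G ω) | m]) ω)
          * (Yhat ω - δ⁻¹ * (P[fun ω => Y ω * (1 - G ω) | m]) ω)) := by
  have hA' : MeasurableSet[𝓕] A := hA
  have hX' : Measurable[𝓕] X := hX
  have hY' : Measurable[𝓕] Y := hY
  have hGmeas : Measurable[𝓕] G := by
    rw [hG]; exact (measurable_const.indicator hA')
  have hGb : ∀ ω, |G ω| ≤ 1 := by
    intro ω; rw [hG]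
    by_cases h : ω ∈ A <;> simp [Set.indicator, h]
  have hBX : 0 ≤ BX := by
    obtain ⟨ω, hω⟩ := hXb.exists
    exact (abs_nonneg _).trans hω
  have hXYb : ∀ᵐ ω ∂P, |X ω * Y ω| ≤ BX * BY := by
    filter_upwards [hXb, hYb] with ω h1 h2
    rw [abs_mul]
    exact mul_le_mul h1 h2 (abs_nonneg _) hBX
  have hBXhat : 0 ≤ BXhat := by
    obtain ⟨ω, hω⟩ := hXhatb.exists
    exact (abs_nonneg _).trans hω
  have hXYhatb : ∀ᵐ ω ∂P, |Xhat ω * Yhat ω| ≤ BXhat * BYhat := by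
    filter_upwards [hXhatb, hYhatb] with ω h1 h2
    rw [abs_mul]
    exact mul_le_mul h1 h2 (abs_nonneg _) hBXhat
  have hGG : ∀ ω, G ω * G ω = G ω := by
    intro ω; rw [hG]
    by_cases h : ω ∈ A <;> simp [Set.indicator, h]
  have hXYA : (fun ω => X ω * Y ω * G ω) =ᵐ[P] (fun ω => Xhat ω * Yhat ω * G ω) := by
    filter_upwards [hXA, hYA] with ω h1 h2
    have hg := hGG ω
    linear_combination Y ω * G ω * h1 + Xhat ω * G ω * h2
      + (Xhat ω * Yhat ω - X ω * Y ω) * hg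
  have e1 := helper_split P m hm G hGmeas hGb δ hGm X Xhat hX' hXhat BX BXhat hXb hXhatb hXA
  have e2 := helper_split P m hm G hGmeas hGb δ hGm Y Yhat hY' hYhat BY BYhat hYb hYhatb hYA
  have e3 := helper_split P m hm G hGmeas hGb δ hGm (fun ω => X ω * Y ω)
    (fun ω => Xhat ω * Yhat ω) (hX'.mul hY') (hXhat.mul hYhat)
    (BX * BY) (BXhat * BYhat) hXYb hXYhatb hXYA
  filter_upwards [e1, e2, e3] with ω h1 h2 h3
  rw [h1, h2, h3]
  have hδ : δ ≠ 0 := ne_of_gt hδ0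
  field_simp
  ring
end

section
/- Let (Ω, 𝓕, P) be a probability space, B > 0, and X, Y : Ω → ℝ measurable with |X| ≤ B and |Y| ≤ B almost surely. Suppose A ∈ 𝓕 is an event with P(Aᶜ) ≤ δ for some δ ∈ [0,1], and there are constants x̂, ŷ ∈ ℝ with |x̂| ≤ B, |ŷ| ≤ B such that X = x̂ a.s. on A and Y = ŷ a.s. on A. Then |Cov(X,Y)| ≤ 8·B²·δ. (This quantifies the paper's conclusion in Lemma 3 that the covariance between the true latent locations is O(δ(n)) when the probability of any estimation error is at most δ(n).) -/
/-!
Covariance is unchanged by shifting either variable by a constant, so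
`Cov(X, Y) = E[(X - x̂)(Y - ŷ)] - E[X - x̂] · E[Y - ŷ]`. All three integrands vanish a.e. on `A`
and are bounded by `4B²`, `2B`, `2B`, so with `d = P(Aᶜ) ≤ 1` the covariance is at most
`4B²d + (2Bd)² ≤ 8B²d`.
-/

open MeasureTheory ProbabilityTheory

section

variable {Ω : Type*} {m : MeasurableSpace Ω} {μ : Measure Ω} {s : Set Ω}

theorem norm_integral_le_of_ae_eq_zero_on {E : Type*} [NormedAddCommGroup E] [NormedSpace ℝ E]
    [IsFiniteMeasure μ] {f : Ω → E} {C : ℝ} (hf0 : ∀ᵐ ω ∂μ, ω ∈ s → f ω = 0)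
    (hfC : ∀ᵐ ω ∂μ, ‖f ω‖ ≤ C) : ‖∫ ω, f ω ∂μ‖ ≤ C * μ.real sᶜ := by
  rw [← setIntegral_eq_integral_of_ae_compl_eq_zero (s := sᶜ)
    (by simpa only [Set.notMem_compl_iff] using hf0)]
  exact norm_setIntegral_le_of_norm_le_const_ae' (measure_lt_top μ _)
    (hfC.mono fun _ h _ ↦ h)

theorem abs_sub_le_two_mul_of_abs_le {x a B : ℝ} (hx : |x| ≤ B) (ha : |a| ≤ B) :
    |x - a| ≤ 2 * B := by
  linarith [abs_sub x a]

theorem abs_integral_sub_le_of_ae_eq_on {f : Ω → ℝ} {a B : ℝ} [IsFiniteMeasure μ]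
    (hfB : ∀ᵐ ω ∂μ, |f ω| ≤ B) (ha : |a| ≤ B) (hfa : ∀ᵐ ω ∂μ, ω ∈ s → f ω = a) :
    |∫ ω, f ω - a ∂μ| ≤ 2 * B * μ.real sᶜ :=
  norm_integral_le_of_ae_eq_zero_on (hfa.mono fun _ h hs ↦ sub_eq_zero.mpr (h hs))
    (hfB.mono fun _ h ↦ abs_sub_le_two_mul_of_abs_le h ha)

theorem abs_integral_sub_mul_sub_le_of_ae_eq_on {f g : Ω → ℝ} {a b B : ℝ} [IsFiniteMeasure μ]
    (hfB : ∀ᵐ ω ∂μ, |f ω| ≤ B) (hgB : ∀ᵐ ω ∂μ, |g ω| ≤ B) (ha : |a| ≤ B) (hb : |b| ≤ B)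
    (hfa : ∀ᵐ ω ∂μ, ω ∈ s → f ω = a) :
    |∫ ω, (f ω - a) * (g ω - b) ∂μ| ≤ (2 * B) * (2 * B) * μ.real sᶜ := by
  refine norm_integral_le_of_ae_eq_zero_on (f := fun ω ↦ (f ω - a) * (g ω - b))
    (hfa.mono fun _ h hs ↦ by rw [h hs, sub_self, zero_mul]) ?_
  filter_upwards [hfB, hgB] with ω hf hg
  have hf_sub := abs_sub_le_two_mul_of_abs_le hf ha
  rw [Real.norm_eq_abs, abs_mul]
  exact mul_le_mul hf_sub (abs_sub_le_two_mul_of_abs_le hg hb) (abs_nonneg _)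
    ((abs_nonneg _).trans hf_sub)

theorem covariance_eq_integral_sub_mul_sub_sub [IsProbabilityMeasure μ] {X Y : Ω → ℝ}
    (hX : MemLp X 2 μ) (hY : MemLp Y 2 μ) (a b : ℝ) :
    cov[X, Y; μ] = ∫ ω, (X ω - a) * (Y ω - b) ∂μ - (∫ ω, X ω - a ∂μ) * ∫ ω, Y ω - b ∂μ := by
  rw [← covariance_sub_const_left (hX.integrable one_le_two) a,
    ← covariance_sub_const_right (hY.integrable one_le_two) b,
    covariance_eq_sub (X := fun ω ↦ X ω - a) (Y := fun ω ↦ Y ω - b)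
      (hX.sub (memLp_const a)) (hY.sub (memLp_const b))]
  rfl

end

theorem abs_cov_le_of_constant_on_good_event_general
    {Ω : Type*} {𝓕 : MeasurableSpace Ω} (P : Measure Ω) [IsProbabilityMeasure P]
    (B : ℝ)
    (X Y : Ω → ℝ) (hX : Measurable X) (hY : Measurable Y)
    (hXb : ∀ᵐ ω ∂P, |X ω| ≤ B) (hYb : ∀ᵐ ω ∂P, |Y ω| ≤ B)
    (A : Set Ω)
    (δ : ℝ) (hPA : (P Aᶜ).toReal ≤ δ)
    (xhat yhat : ℝ) (hxhat : |xhat| ≤ B) (hyhat : |yhat| ≤ B)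
    (hXA : ∀ᵐ ω ∂P, ω ∈ A → X ω = xhat)
    (hYA : ∀ᵐ ω ∂P, ω ∈ A → Y ω = yhat) :
    |(∫ ω, X ω * Y ω ∂P) - (∫ ω, X ω ∂P) * (∫ ω, Y ω ∂P)| ≤ 8 * B ^ 2 * δ := by
  have hXL : MemLp X 2 P := .of_bound hX.aestronglyMeasurable B hXb
  have hYL : MemLp Y 2 P := .of_bound hY.aestronglyMeasurable B hYb
  have hB : 0 ≤ B := (abs_nonneg _).trans hxhat
  have hd0 : 0 ≤ P.real Aᶜ := measureReal_nonneg
  have hd1 : P.real Aᶜ ≤ 1 := measureReal_le_one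
  have hXY := abs_integral_sub_mul_sub_le_of_ae_eq_on hXb hYb hxhat hyhat hXA
  have hXm := abs_integral_sub_le_of_ae_eq_on hXb hxhat hXA
  have hYm := abs_integral_sub_le_of_ae_eq_on hYb hyhat hYA
  have hcov : cov[X, Y; P] = ∫ ω, X ω * Y ω ∂P - (∫ ω, X ω ∂P) * ∫ ω, Y ω ∂P :=
    covariance_eq_sub hXL hYL
  rw [← hcov, covariance_eq_integral_sub_mul_sub_sub hXL hYL xhat yhat]
  calc _ ≤ |∫ ω, (X ω - xhat) * (Y ω - yhat) ∂P|
          + |∫ ω, X ω - xhat ∂P| * |∫ ω, Y ω - yhat ∂P| := by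
        rw [← abs_mul]; exact abs_sub _ _
    _ ≤ (2 * B) * (2 * B) * P.real Aᶜ + (2 * B * P.real Aᶜ) * (2 * B * P.real Aᶜ) := by
        gcongr
    _ ≤ 8 * B ^ 2 * P.real Aᶜ := by nlinarith [mul_nonneg (mul_nonneg hB hB) hd0]
    _ ≤ 8 * B ^ 2 * δ := by gcongr; exact hPA

/-- If `|X|, |Y| ≤ B` a.s., `P(Aᶜ) ≤ δ`, and `X = x̂`, `Y = ŷ` a.s. on `A` for constants
with `|x̂|, |ŷ| ≤ B`, then `|Cov(X,Y)| ≤ 8·B²·δ`. -/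
theorem abs_cov_le_of_constant_on_good_event
    {Ω : Type*} {𝓕 : MeasurableSpace Ω} (P : Measure Ω) [IsProbabilityMeasure P]
    (B : ℝ) (hB : 0 < B)
    (X Y : Ω → ℝ) (hX : Measurable X) (hY : Measurable Y)
    (hXb : ∀ᵐ ω ∂P, |X ω| ≤ B) (hYb : ∀ᵐ ω ∂P, |Y ω| ≤ B)
    (A : Set Ω) (hA : MeasurableSet A)
    (δ : ℝ) (hδ0 : 0 ≤ δ) (hδ1 : δ ≤ 1) (hPA : (P Aᶜ).toReal ≤ δ)
    (xhat yhat : ℝ) (hxhat : |xhat| ≤ B) (hyhat : |yhat| ≤ B)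
    (hXA : ∀ᵐ ω ∂P, ω ∈ A → X ω = xhat)
    (hYA : ∀ᵐ ω ∂P, ω ∈ A → Y ω = yhat) :
    |(∫ ω, X ω * Y ω ∂P) - (∫ ω, X ω ∂P) * (∫ ω, Y ω ∂P)| ≤ 8 * B ^ 2 * δ :=
  abs_cov_le_of_constant_on_good_event_general (𝓕 := 𝓕) P B X Y hX hY hXb hYb A δ hPA xhat yhat
    hxhat hyhat hXA hYA
end

section
/- (Quantitative core of Theorem 2.) Let (Ω, 𝓕, P) be a probability space, B > 0, ε ≥ 0, and δ ∈ [0,1]. Let X, Y : Ω → ℝ be measurable with |X| ≤ B and |Y| ≤ B almost surely. Suppose A ∈ 𝓕 is an event with P(Aᶜ) ≤ δ, and there are constants x, y ∈ ℝ with |x| ≤ B and |y| ≤ B such that |X − x| ≤ ε and |Y − y| ≤ ε almost surely on A. Then |Cov(X,Y)| ≤ 4·ε² + 16·B²·δ. -/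
/-!
Covariance is unchanged by shifting `X` and `Y` by constants, so
`Cov(X, Y) = E[(X - x)(Y - y)] - (E X - x)(E Y - y)`. Splitting each expectation over `A` and
`Aᶜ`, the integrands are small on `A` (by `ε`, resp. `ε²`) and bounded by `2B`, resp. `4B²`, on
`Aᶜ`; with `p = P(Aᶜ) ≤ δ` this gives `|E[(X - x)(Y - y)]| ≤ ε² + 4B²p` and
`|E X - x| ≤ ε + 2Bp`, and `(ε + 2Bp)² ≤ 2ε² + 8B²p` since `p ≤ 1`.
-/

open MeasureTheory ProbabilityTheory

theorem abs_sub_le_two_mul {a b B : ℝ} (ha : |a| ≤ B) (hb : |b| ≤ B) : |a - b| ≤ 2 * B := by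
  linarith [abs_sub a b]

theorem abs_mul_le_mul_of_abs_le {a b c d : ℝ} (ha : |a| ≤ c) (hb : |b| ≤ d) (hc : 0 ≤ c) :
    |a * b| ≤ c * d := by
  rw [abs_mul]; exact mul_le_mul ha hb (abs_nonneg b) hc

section

variable {Ω : Type*} {mΩ : MeasurableSpace Ω} {P : Measure Ω} [IsProbabilityMeasure P]

theorem abs_integral_le_add_mul_measureReal_compl {f : Ω → ℝ} (hf : Integrable f P)
    {A : Set Ω} (hA : MeasurableSet A) {c d : ℝ} (hc : 0 ≤ c)
    (hfA : ∀ᵐ ω ∂P, ω ∈ A → |f ω| ≤ c) (hfd : ∀ᵐ ω ∂P, |f ω| ≤ d) :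
    |∫ ω, f ω ∂P| ≤ c + d * P.real Aᶜ := by
  have hA_int : ‖∫ ω in A, f ω ∂P‖ ≤ c * P.real A :=
    norm_setIntegral_le_of_norm_le_const_ae' (measure_lt_top P A) hfA
  have hAc_int : ‖∫ ω in Aᶜ, f ω ∂P‖ ≤ d * P.real Aᶜ :=
    norm_setIntegral_le_of_norm_le_const_ae' (measure_lt_top P Aᶜ) (hfd.mono fun _ h _ => h)
  calc |∫ ω, f ω ∂P| = |∫ ω in A, f ω ∂P + ∫ ω in Aᶜ, f ω ∂P| := by
        rw [integral_add_compl hA hf]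
    _ ≤ c * P.real A + d * P.real Aᶜ := (abs_add_le _ _).trans (add_le_add hA_int hAc_int)
    _ ≤ c + d * P.real Aᶜ := by
        gcongr
        exact mul_le_of_le_one_right hc measureReal_le_one

theorem abs_integral_sub_le_add_mul_measureReal_compl {X : Ω → ℝ} (hX : Integrable X P)
    {A : Set Ω} (hA : MeasurableSet A) {x ε d : ℝ} (hε : 0 ≤ ε)
    (hXA : ∀ᵐ ω ∂P, ω ∈ A → |X ω - x| ≤ ε) (hXd : ∀ᵐ ω ∂P, |X ω - x| ≤ d) :
    |P[X] - x| ≤ ε + d * P.real Aᶜ := by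
  have h := abs_integral_le_add_mul_measureReal_compl (f := fun ω => X ω - x)
    (hX.sub (integrable_const x)) hA hε hXA hXd
  rwa [integral_sub hX (integrable_const x), integral_const, probReal_univ, one_smul] at h

theorem covariance_eq_integral_sub_mul_sub {X Y : Ω → ℝ} (hX : MemLp X 2 P) (hY : MemLp Y 2 P)
    (x y : ℝ) :
    cov[X, Y; P] = ∫ ω, (X ω - x) * (Y ω - y) ∂P - (P[X] - x) * (P[Y] - y) := by
  have hXi := hX.integrable one_le_two
  have hYi := hY.integrable one_le_two
  rw [← covariance_sub_const_left hXi x, ← covariance_sub_const_right hYi y,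
    covariance_eq_sub (X := fun ω => X ω - x) (Y := fun ω => Y ω - y)
      (hX.sub (memLp_const x)) (hY.sub (memLp_const y)),
    integral_sub hXi (integrable_const x), integral_sub hYi (integrable_const y)]
  simp

end

theorem abs_cov_le_of_close_on_good_event_general
    {Ω : Type*} {𝓕 : MeasurableSpace Ω} (P : Measure Ω) [IsProbabilityMeasure P]
    (B : ℝ) (ε : ℝ) (hε : 0 ≤ ε)
    (δ : ℝ)
    (X Y : Ω → ℝ) (hX : Measurable X) (hY : Measurable Y)
    (hXb : ∀ᵐ ω ∂P, |X ω| ≤ B) (hYb : ∀ᵐ ω ∂P, |Y ω| ≤ B)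
    (A : Set Ω) (hA : MeasurableSet A) (hPA : (P Aᶜ).toReal ≤ δ)
    (x y : ℝ) (hx : |x| ≤ B) (hy : |y| ≤ B)
    (hXA : ∀ᵐ ω ∂P, ω ∈ A → |X ω - x| ≤ ε)
    (hYA : ∀ᵐ ω ∂P, ω ∈ A → |Y ω - y| ≤ ε) :
    |(∫ ω, X ω * Y ω ∂P) - (∫ ω, X ω ∂P) * (∫ ω, Y ω ∂P)|
      ≤ 4 * ε ^ 2 + 16 * B ^ 2 * δ := by
  have hXL : MemLp X 2 P := .of_bound hX.aestronglyMeasurable B hXb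
  have hYL : MemLp Y 2 P := .of_bound hY.aestronglyMeasurable B hYb
  have hXd : ∀ᵐ ω ∂P, |X ω - x| ≤ 2 * B := hXb.mono fun _ h => abs_sub_le_two_mul h hx
  have hYd : ∀ᵐ ω ∂P, |Y ω - y| ≤ 2 * B := hYb.mono fun _ h => abs_sub_le_two_mul h hy
  have hB : 0 ≤ 2 * B := by linarith [abs_nonneg x]
  have hprod := abs_integral_le_add_mul_measureReal_compl
    ((hXL.sub (memLp_const x)).integrable_mul (hYL.sub (memLp_const y))) hA (mul_nonneg hε hε)
    (by filter_upwards [hXA, hYA] with ω hXω hYω hω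
        exact abs_mul_le_mul_of_abs_le (hXω hω) (hYω hω) hε)
    (by filter_upwards [hXd, hYd] with ω hXω hYω using abs_mul_le_mul_of_abs_le hXω hYω hB)
  have hmeanX :=
    abs_integral_sub_le_add_mul_measureReal_compl (hXL.integrable one_le_two) hA hε hXA hXd
  have hmeanY :=
    abs_integral_sub_le_add_mul_measureReal_compl (hYL.integrable one_le_two) hA hε hYA hYd
  have hcov : ∫ ω, X ω * Y ω ∂P - (∫ ω, X ω ∂P) * (∫ ω, Y ω ∂P) = cov[X, Y; P] :=
    (covariance_eq_sub hXL hYL).symm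
  set p := P.real Aᶜ
  have hp : 0 ≤ p ∧ p ≤ 1 := ⟨measureReal_nonneg, measureReal_le_one⟩
  have hpδ : p ≤ δ := hPA
  rw [hcov, covariance_eq_integral_sub_mul_sub hXL hYL x y]
  calc _ ≤ |∫ ω, (X ω - x) * (Y ω - y) ∂P| + |P[X] - x| * |P[Y] - y| := by
        rw [← abs_mul]; exact abs_sub _ _
    _ ≤ ε * ε + 2 * B * (2 * B) * p + (ε + 2 * B * p) * (ε + 2 * B * p) :=
        add_le_add hprod (mul_le_mul hmeanX hmeanY (abs_nonneg _) (by positivity))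
    _ ≤ 4 * ε ^ 2 + 16 * B ^ 2 * δ := by
        nlinarith [sq_nonneg (ε - 2 * B * p),
          mul_le_mul_of_nonneg_left hp.2 (mul_nonneg hp.1 (sq_nonneg B)),
          mul_le_mul_of_nonneg_left hpδ (sq_nonneg B)]

/-- Quantitative core of Theorem 2.  If `|X|, |Y| ≤ B` a.s., `P(Aᶜ) ≤ δ`, and on the event
`A` the variables are within `ε` of constants `x, y` with `|x|, |y| ≤ B`, then
`|Cov(X,Y)| ≤ 4·ε² + 16·B²·δ`. -/
theorem abs_cov_le_of_close_on_good_event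
    {Ω : Type*} {𝓕 : MeasurableSpace Ω} (P : Measure Ω) [IsProbabilityMeasure P]
    (B : ℝ) (hB : 0 < B) (ε : ℝ) (hε : 0 ≤ ε)
    (δ : ℝ) (hδ0 : 0 ≤ δ) (hδ1 : δ ≤ 1)
    (X Y : Ω → ℝ) (hX : Measurable X) (hY : Measurable Y)
    (hXb : ∀ᵐ ω ∂P, |X ω| ≤ B) (hYb : ∀ᵐ ω ∂P, |Y ω| ≤ B)
    (A : Set Ω) (hA : MeasurableSet A) (hPA : (P Aᶜ).toReal ≤ δ)
    (x y : ℝ) (hx : |x| ≤ B) (hy : |y| ≤ B)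
    (hXA : ∀ᵐ ω ∂P, ω ∈ A → |X ω - x| ≤ ε)
    (hYA : ∀ᵐ ω ∂P, ω ∈ A → |Y ω - y| ≤ ε) :
    |(∫ ω, X ω * Y ω ∂P) - (∫ ω, X ω ∂P) * (∫ ω, Y ω ∂P)|
      ≤ 4 * ε ^ 2 + 16 * B ^ 2 * δ :=
  abs_cov_le_of_close_on_good_event_general (𝓕 := 𝓕) P B ε hε δ X Y hX hY hXb hYb A hA hPA x y hx hy
    hXA hYA
end
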